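/- Let G be the two-cycle spoke graph and φ the standard factor code on G. Then the image Y = φ(X̂_G) equals the S-gap shift X(S) with gap set S = {n ∈ ℤ_{≥0} : n = m + s·d_1 + t·d_2 for some s, t ∈ ℤ_{≥0}}. -/

import Mathlib

open Set

noncomputable section

/-- The left shift map on bi-infinite sequences over `A`. -/
def shiftMap {A : Type*} (x : ℤ → A) : ℤ → A := fun i => x (i + 1)

/-- The word `w` occurs in `x` starting at coordinate `i`. -/
def OccursAt {A : Type*} (w : List A) (x : ℤ → A) (i : ℤ) : Prop :=
  ∀ k : Fin w.length, x (i + (k : ℕ)) = w.get k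

/-- The word `w` belongs to the language of `X`. -/
def OccursIn {A : Type*} (w : List A) (X : Set (ℤ → A)) : Prop :=
  ∃ x ∈ X, ∃ i : ℤ, OccursAt w x i

/-- A shift space: a nonempty, closed, shift-invariant subset of the full shift. -/
structure IsShiftSpace {A : Type*} [TopologicalSpace A] (X : Set (ℤ → A)) : Prop where
  nonempty : X.Nonempty
  isClosed : IsClosed X
  shift_eq : shiftMap '' X = X

/-- The set of points avoiding every word of the forbidden set `F`. -/
def ForbidSet {A : Type*} (F : Set (List A)) : Set (ℤ → A) :=
  {x | ∀ w ∈ F, ∀ i : ℤ, ¬ OccursAt w x i}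

/-- A shift of finite type: defined by a finite forbidden set of words. -/
def IsSFT {A : Type*} (X : Set (ℤ → A)) : Prop :=
  ∃ F : Set (List A), F.Finite ∧ X = ForbidSet F

/-- Irreducibility of a shift space: any two allowed words can be glued. -/
def IrreducibleShift {A : Type*} (X : Set (ℤ → A)) : Prop :=
  ∀ u v : List A, OccursIn u X → OccursIn v X → ∃ w : List A, OccursIn (u ++ w ++ v) X

/-- The `S`-gap shift: every maximal finite run of `0`'s lying between two `1`'s has
length in `S`, and if `S` is finite there is no run of `0`'s longer than `sSup S`. -/
def GapShift (S : Set ℕ) : Set (ℤ → Fin 2) :=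
  {x | (∀ i j : ℤ, i < j → x i = 1 → x j = 1 →
          (∀ l : ℤ, i < l → l < j → x l = 0) → (j - i - 1).toNat ∈ S) ∧
       (S.Finite → ∀ i : ℤ, ∃ l : ℤ, i ≤ l ∧ l ≤ i + ((sSup S : ℕ) : ℤ) ∧ x l = 1)}

/-- The factor code with unambiguous symbol `D`: the sliding block code sending `x`
to the indicator sequence of the occurrences of the block `D` in `x`. -/
def unambigCode {A : Type*} (D : List A) : (ℤ → A) → (ℤ → Fin 2) :=
  fun x i => @ite _ (OccursAt D x i) (Classical.propDecidable _) 1 0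

/-- `φ` restricted to `Z` is finite-to-one: fibers have uniformly bounded cardinality. -/
def FiniteToOneOn {A B : Type*} (φ : (ℤ → A) → (ℤ → B)) (Z : Set (ℤ → A)) : Prop :=
  ∃ M : ℕ, ∀ y : ℤ → B, ({x ∈ Z | φ x = y}).Finite ∧ ({x ∈ Z | φ x = y}).ncard ≤ M

/-- The set of vertices appearing in the list `l`. -/
def listVerts {V : Type*} (l : List V) : Set V := {v | v ∈ l}

/-- The set of (directed) edges traversed consecutively along the list `l`. -/
def listEdges {V : Type*} (l : List V) : Set (V × V) := {p | p ∈ l.zip l.tail}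

/-- A regular spoke at the central state `B` in a graph with edge relation `E`:
a simple path `γ⁺` (vertex sequence `gp`) from `B` to `B' ≠ B`, a simple path `γ⁻`
(vertex sequence `gm`) from `B'` to `B`, and a simple cycle `C` through `B'`
(vertex sequence `cyc`, starting at `B'`, with the returning edge to `B'`), which are
pairwise disjoint except that all three share `B'` and `γ⁺`, `γ⁻` share `B`. -/
structure RegSpoke (V : Type*) (E : V → V → Prop) (B : V) where
  B' : V
  hB' : B' ≠ B
  gp : List V
  gm : List V
  cyc : List V
  gp_chain : gp.Chain' E
  gp_head : gp.head? = some B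
  gp_last : gp.getLast? = some B'
  gp_nodup : gp.Nodup
  gp_len : 2 ≤ gp.length
  gm_chain : gm.Chain' E
  gm_head : gm.head? = some B'
  gm_last : gm.getLast? = some B
  gm_nodup : gm.Nodup
  gm_len : 2 ≤ gm.length
  cyc_chain : (cyc ++ [B']).Chain' E
  cyc_head : cyc.head? = some B'
  cyc_nodup : cyc.Nodup
  cyc_len : 1 ≤ cyc.length
  int_gp_gm : listVerts gp ∩ listVerts gm = {B, B'}
  int_gp_cyc : listVerts gp ∩ listVerts cyc = {B'}
  int_gm_cyc : listVerts gm ∩ listVerts cyc = {B'}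

/-- The vertex set of a regular spoke. -/
def RegSpoke.verts {V : Type*} {E : V → V → Prop} {B : V} (r : RegSpoke V E B) : Set V :=
  listVerts r.gp ∪ listVerts r.gm ∪ listVerts r.cyc

/-- The edge set of a regular spoke. -/
def RegSpoke.edges {V : Type*} {E : V → V → Prop} {B : V} (r : RegSpoke V E B) :
    Set (V × V) :=
  listEdges r.gp ∪ listEdges r.gm ∪ listEdges (r.cyc ++ [r.B'])

/-- A degenerate spoke at `B`: a single simple cycle through `B`
(vertex sequence `cyc` starting at `B`, with the returning edge to `B`). -/
structure DegSpoke (V : Type*) (E : V → V → Prop) (B : V) where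
  cyc : List V
  cyc_chain : (cyc ++ [B]).Chain' E
  cyc_head : cyc.head? = some B
  cyc_nodup : cyc.Nodup
  cyc_len : 1 ≤ cyc.length

/-- The vertex set of a degenerate spoke. -/
def DegSpoke.verts {V : Type*} {E : V → V → Prop} {B : V} (s : DegSpoke V E B) : Set V :=
  listVerts s.cyc

/-- The edge set of a degenerate spoke. -/
def DegSpoke.edges {V : Type*} {E : V → V → Prop} {B : V} (s : DegSpoke V E B) :
    Set (V × V) :=
  listEdges (s.cyc ++ [B])

/-- The vertex shift of the graph with vertex set `V` and edge relation `E`. -/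
def vertexShift {V : Type*} (E : V → V → Prop) : Set (ℤ → V) :=
  {x | ∀ i : ℤ, E (x i) (x (i + 1))}

/-- The vertex labelling sending the central state `B` to `1` and all other vertices
to `0`. -/
def stdLabel {V : Type*} (B : V) : V → Fin 2 :=
  fun v => @ite _ (v = B) (Classical.propDecidable _) 1 0

/-- The 1-block code induced by a vertex labelling `Φ`. -/
def oneBlockCode {V W : Type*} (Φ : V → W) : (ℤ → V) → (ℤ → W) := fun x i => Φ (x i)

/-- The two-cycle spoke graph: a central state `B`, a simple path `γ⁺` (vertex sequence
`gp`) from `B` to `B' ≠ B`, a simple path `γ⁻` (vertex sequence `gm`) from `B'` to `B`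
(intersecting `γ⁺` only in `B` and `B'`), and two distinct simple cycles `C₁`, `C₂`
through `B'` (vertex sequences `c₁`, `c₂` starting at `B'`), where `γ⁺`, `γ⁻`, `C₁`,
`C₂` pairwise share only the vertex `B'` (except that `γ⁺`, `γ⁻` also share `B`);
the vertices and edges of the graph are exactly those of these four constituents. -/
structure TwoCycleSpokeGraph (V : Type*) (E : V → V → Prop) (B : V) where
  B' : V
  hB' : B' ≠ B
  gp : List V
  gm : List V
  c₁ : List V
  c₂ : List V
  gp_chain : gp.Chain' E
  gp_head : gp.head? = some B
  gp_last : gp.getLast? = some B'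
  gp_nodup : gp.Nodup
  gp_len : 2 ≤ gp.length
  gm_chain : gm.Chain' E
  gm_head : gm.head? = some B'
  gm_last : gm.getLast? = some B
  gm_nodup : gm.Nodup
  gm_len : 2 ≤ gm.length
  c₁_chain : (c₁ ++ [B']).Chain' E
  c₁_head : c₁.head? = some B'
  c₁_nodup : c₁.Nodup
  c₁_len : 1 ≤ c₁.length
  c₂_chain : (c₂ ++ [B']).Chain' E
  c₂_head : c₂.head? = some B'
  c₂_nodup : c₂.Nodup
  c₂_len : 1 ≤ c₂.length
  c_ne : c₁ ≠ c₂
  int_gp_gm : listVerts gp ∩ listVerts gm = {B, B'}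
  int_gp_c₁ : listVerts gp ∩ listVerts c₁ = {B'}
  int_gp_c₂ : listVerts gp ∩ listVerts c₂ = {B'}
  int_gm_c₁ : listVerts gm ∩ listVerts c₁ = {B'}
  int_gm_c₂ : listVerts gm ∩ listVerts c₂ = {B'}
  int_c₁_c₂ : listVerts c₁ ∩ listVerts c₂ = {B'}
  cover : listVerts gp ∪ listVerts gm ∪ listVerts c₁ ∪ listVerts c₂ = Set.univ
  edge_iff : ∀ u v : V, E u v ↔
    (u, v) ∈ listEdges gp ∪ listEdges gm ∪ listEdges (c₁ ++ [B']) ∪ listEdges (c₂ ++ [B'])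

namespace TwoCycleSpokeGraph

variable {V : Type*} {E : V → V → Prop} {B : V}

/-- `m = |γ⁺| + |γ⁻| − 1`. -/
def m (G : TwoCycleSpokeGraph V E B) : ℕ := G.gp.length + G.gm.length - 3

/-- `d₁ = |C₁|`. -/
def d₁ (G : TwoCycleSpokeGraph V E B) : ℕ := G.c₁.length

/-- `d₂ = |C₂|`. -/
def d₂ (G : TwoCycleSpokeGraph V E B) : ℕ := G.c₂.length

end TwoCycleSpokeGraph

section Spoke

variable {V : Type*} {E : V → V → Prop} {B : V}

lemma mem_listEdges {l : List V} {u v : V} :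
    (u, v) ∈ listEdges l ↔ ∃ k, ∃ h : k + 1 < l.length, l[k] = u ∧ l[k+1] = v := by
  unfold listEdges
  simp only [Set.mem_setOf_eq, List.mem_iff_getElem]
  constructor
  · rintro ⟨n, hn, hval⟩
    have hn' : n + 1 < l.length := by
      have := hn
      simp [List.length_zip, List.length_tail] at this
      omega
    have heq : (u, v) = (l[n]'(by omega), l.tail[n]'(by simp [List.length_tail]; omega)) := by
      rw [← hval]; exact (List.getElem_zip (h := hn)).symm ▸ rfl
    have h1 : u = l[n]'(by omega) := congrArg Prod.fst heq
    have h2 : v = l.tail[n]'(by simp [List.length_tail]; omega) := congrArg Prod.snd heq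
    rw [List.getElem_tail] at h2
    exact ⟨n, hn', h1.symm, h2.symm⟩
  · rintro ⟨k, h, h1, h2⟩
    have hk : k < (l.zip l.tail).length := by
      simp [List.length_zip, List.length_tail]; omega
    refine ⟨k, hk, ?_⟩
    rw [List.getElem_zip]
    rw [List.getElem_tail]
    exact Prod.ext h1 h2

lemma edge_of_chain' {l : List V} (hc : l.Chain' E) {k : ℕ} (h : k + 1 < l.length) :
    E l[k] (l[k+1]'h) := by
  exact List.isChain_iff_getElem.1 hc k h

namespace TwoCycleSpokeGraph

variable (G : TwoCycleSpokeGraph V E B)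

lemma gp_pos : 0 < G.gp.length := by have := G.gp_len; omega
lemma gm_pos : 0 < G.gm.length := by have := G.gm_len; omega

lemma gp_zero : G.gp[0]'(G.gp_pos) = B := by
  have h := G.gp_head
  rw [List.head?_eq_getElem?, List.getElem?_eq_getElem G.gp_pos] at h
  exact Option.some_injective _ h

lemma gp_getLast : G.gp[G.gp.length - 1]'(by have := G.gp_pos; omega) = G.B' := by
  have h := G.gp_last
  rw [List.getLast?_eq_getElem?, List.getElem?_eq_getElem (by have := G.gp_pos; omega)] at h
  exact Option.some_injective _ h

lemma gm_zero : G.gm[0]'(G.gm_pos) = G.B' := by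
  have h := G.gm_head
  rw [List.head?_eq_getElem?, List.getElem?_eq_getElem G.gm_pos] at h
  exact Option.some_injective _ h

lemma gm_getLast : G.gm[G.gm.length - 1]'(by have := G.gm_pos; omega) = B := by
  have h := G.gm_last
  rw [List.getLast?_eq_getElem?, List.getElem?_eq_getElem (by have := G.gm_pos; omega)] at h
  exact Option.some_injective _ h

lemma c₁_pos : 0 < G.c₁.length := G.c₁_len
lemma c₂_pos : 0 < G.c₂.length := G.c₂_len

lemma c₁_zero : G.c₁[0]'(G.c₁_pos) = G.B' := by
  have h := G.c₁_head
  rw [List.head?_eq_getElem?, List.getElem?_eq_getElem G.c₁_pos] at h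
  exact Option.some_injective _ h

lemma c₂_zero : G.c₂[0]'(G.c₂_pos) = G.B' := by
  have h := G.c₂_head
  rw [List.head?_eq_getElem?, List.getElem?_eq_getElem G.c₂_pos] at h
  exact Option.some_injective _ h

lemma gp_get_eq_B_iff {k : ℕ} (h : k < G.gp.length) : G.gp[k] = B ↔ k = 0 := by
  constructor
  · intro hk
    have : G.gp[k] = G.gp[0]'(G.gp_pos) := by rw [hk, G.gp_zero]
    exact (G.gp_nodup.getElem_inj_iff).1 this
  · rintro rfl; exact G.gp_zero

lemma gp_get_eq_B'_iff {k : ℕ} (h : k < G.gp.length) : G.gp[k] = G.B' ↔ k = G.gp.length - 1 := by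
  constructor
  · intro hk
    have : G.gp[k] = G.gp[G.gp.length - 1]'(by omega) := by rw [hk, G.gp_getLast]
    exact (G.gp_nodup.getElem_inj_iff).1 this
  · rintro rfl; exact G.gp_getLast

lemma gm_get_eq_B'_iff {k : ℕ} (h : k < G.gm.length) : G.gm[k] = G.B' ↔ k = 0 := by
  constructor
  · intro hk
    have : G.gm[k] = G.gm[0]'(G.gm_pos) := by rw [hk, G.gm_zero]
    exact (G.gm_nodup.getElem_inj_iff).1 this
  · rintro rfl; exact G.gm_zero

lemma gm_get_eq_B_iff {k : ℕ} (h : k < G.gm.length) : G.gm[k] = B ↔ k = G.gm.length - 1 := by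
  constructor
  · intro hk
    have : G.gm[k] = G.gm[G.gm.length - 1]'(by omega) := by rw [hk, G.gm_getLast]
    exact (G.gm_nodup.getElem_inj_iff).1 this
  · rintro rfl; exact G.gm_getLast

lemma c₁_get_eq_B'_iff {k : ℕ} (h : k < G.c₁.length) : G.c₁[k] = G.B' ↔ k = 0 := by
  constructor
  · intro hk
    have : G.c₁[k] = G.c₁[0]'(G.c₁_pos) := by rw [hk, G.c₁_zero]
    exact (G.c₁_nodup.getElem_inj_iff).1 this
  · rintro rfl; exact G.c₁_zero

lemma c₂_get_eq_B'_iff {k : ℕ} (h : k < G.c₂.length) : G.c₂[k] = G.B' ↔ k = 0 := by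
  constructor
  · intro hk
    have : G.c₂[k] = G.c₂[0]'(G.c₂_pos) := by rw [hk, G.c₂_zero]
    exact (G.c₂_nodup.getElem_inj_iff).1 this
  · rintro rfl; exact G.c₂_zero

lemma B_mem_gp : B ∈ G.gp := by
  rw [List.mem_iff_getElem]; exact ⟨0, G.gp_pos, G.gp_zero⟩

lemma B_mem_gm : B ∈ G.gm := by
  rw [List.mem_iff_getElem]
  refine ⟨G.gm.length - 1, by have := G.gm_pos; omega, G.gm_getLast⟩

lemma B_not_mem_c₁ : B ∉ G.c₁ := by
  intro hB
  have : B ∈ listVerts G.gm ∩ listVerts G.c₁ := ⟨G.B_mem_gm, hB⟩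
  rw [G.int_gm_c₁] at this
  exact G.hB' (this.symm)

lemma B_not_mem_c₂ : B ∉ G.c₂ := by
  intro hB
  have : B ∈ listVerts G.gm ∩ listVerts G.c₂ := ⟨G.B_mem_gm, hB⟩
  rw [G.int_gm_c₂] at this
  exact G.hB' (this.symm)

lemma c₁_get_ne_B {k : ℕ} (h : k < G.c₁.length) : G.c₁[k] ≠ B := by
  intro hk; exact G.B_not_mem_c₁ (List.mem_iff_getElem.2 ⟨k, h, hk⟩)

lemma c₂_get_ne_B {k : ℕ} (h : k < G.c₂.length) : G.c₂[k] ≠ B := by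
  intro hk; exact G.B_not_mem_c₂ (List.mem_iff_getElem.2 ⟨k, h, hk⟩)

end TwoCycleSpokeGraph

end Spoke
section Spoke2

variable {V : Type*} {E : V → V → Prop} {B : V}

lemma fst_mem_of_listEdges {l : List V} {u v : V} (h : (u, v) ∈ listEdges l) : u ∈ l := by
  obtain ⟨k, hk, h1, _⟩ := mem_listEdges.1 h
  exact List.mem_iff_getElem.2 ⟨k, by omega, h1⟩

namespace TwoCycleSpokeGraph

variable (G : TwoCycleSpokeGraph V E B)

lemma cc₁_getElem {k : ℕ} (h : k < G.c₁.length) :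
    (G.c₁ ++ [G.B'])[k]'(by simp; omega) = G.c₁[k] := List.getElem_append_left h

lemma cc₂_getElem {k : ℕ} (h : k < G.c₂.length) :
    (G.c₂ ++ [G.B'])[k]'(by simp; omega) = G.c₂[k] := List.getElem_append_left h

lemma cc₁_getElem_last :
    (G.c₁ ++ [G.B'])[G.c₁.length]'(by simp) = G.B' :=
  List.getElem_concat_length rfl _

lemma cc₂_getElem_last :
    (G.c₂ ++ [G.B'])[G.c₂.length]'(by simp) = G.B' :=
  List.getElem_concat_length rfl _

lemma edge_gp {k : ℕ} (h : k + 1 < G.gp.length) : E (G.gp[k]'(by omega)) G.gp[k+1] :=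
  edge_of_chain' G.gp_chain h

lemma edge_gm {k : ℕ} (h : k + 1 < G.gm.length) : E (G.gm[k]'(by omega)) G.gm[k+1] :=
  edge_of_chain' G.gm_chain h

lemma edge_c₁ {k : ℕ} (h : k + 1 < G.c₁.length) : E (G.c₁[k]'(by omega)) G.c₁[k+1] := by
  have := edge_of_chain' G.c₁_chain (l := G.c₁ ++ [G.B']) (k := k) (by simp; omega)
  rwa [G.cc₁_getElem (by omega), G.cc₁_getElem (by omega)] at this

lemma edge_c₂ {k : ℕ} (h : k + 1 < G.c₂.length) : E (G.c₂[k]'(by omega)) G.c₂[k+1] := by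
  have := edge_of_chain' G.c₂_chain (l := G.c₂ ++ [G.B']) (k := k) (by simp; omega)
  rwa [G.cc₂_getElem (by omega), G.cc₂_getElem (by omega)] at this

lemma edge_c₁_last : E (G.c₁[G.c₁.length - 1]'(by have := G.c₁_pos; omega)) G.B' := by
  have hpos := G.c₁_pos
  obtain ⟨n, hn⟩ : ∃ n, G.c₁.length = n + 1 := ⟨G.c₁.length - 1, by omega⟩
  have h0 := edge_of_chain' G.c₁_chain (l := G.c₁ ++ [G.B']) (k := n) (by simp; omega)
  rw [G.cc₁_getElem (by omega)] at h0
  have h2 : (G.c₁ ++ [G.B'])[n+1]'(by simp; omega) = G.B' :=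
    List.getElem_concat_length (by omega) _
  rw [h2] at h0
  simpa [hn] using h0

lemma edge_c₂_last : E (G.c₂[G.c₂.length - 1]'(by have := G.c₂_pos; omega)) G.B' := by
  have hpos := G.c₂_pos
  obtain ⟨n, hn⟩ : ∃ n, G.c₂.length = n + 1 := ⟨G.c₂.length - 1, by omega⟩
  have h0 := edge_of_chain' G.c₂_chain (l := G.c₂ ++ [G.B']) (k := n) (by simp; omega)
  rw [G.cc₂_getElem (by omega)] at h0
  have h2 : (G.c₂ ++ [G.B'])[n+1]'(by simp; omega) = G.B' :=
    List.getElem_concat_length (by omega) _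
  rw [h2] at h0
  simpa [hn] using h0

/-- Cyclic step in `c₁`. -/
lemma cyc₁_step (a : ℕ) :
    E (G.c₁[a % G.c₁.length]'(Nat.mod_lt _ G.c₁_pos))
      (G.c₁[(a+1) % G.c₁.length]'(Nat.mod_lt _ G.c₁_pos)) := by
  have hpos := G.c₁_pos
  have key : (a % G.c₁.length + 1) % G.c₁.length = (a+1) % G.c₁.length :=
    Nat.mod_add_mod a G.c₁.length 1
  by_cases h : a % G.c₁.length + 1 < G.c₁.length
  · have heq : (a+1) % G.c₁.length = a % G.c₁.length + 1 := by
      rw [← key, Nat.mod_eq_of_lt h]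
    simp only [getElem_congr_idx heq]
    exact G.edge_c₁ h
  · have hlt : a % G.c₁.length < G.c₁.length := Nat.mod_lt a hpos
    have h1 : a % G.c₁.length = G.c₁.length - 1 := by omega
    have h2 : (a+1) % G.c₁.length = 0 := by
      rw [← key, h1]
      have : G.c₁.length - 1 + 1 = G.c₁.length := by omega
      rw [this, Nat.mod_self]
    simp only [getElem_congr_idx h1, getElem_congr_idx h2]
    have := G.edge_c₁_last
    rwa [← G.c₁_zero] at this

/-- Edge classification. -/
lemma edge_cases {u v : V} (h : E u v) :
    (u, v) ∈ listEdges G.gp ∨ (u, v) ∈ listEdges G.gm ∨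
    (u, v) ∈ listEdges (G.c₁ ++ [G.B']) ∨ (u, v) ∈ listEdges (G.c₂ ++ [G.B']) := by
  have := (G.edge_iff u v).1 h
  simpa [Set.mem_union, or_assoc] using this

lemma mem_c₁_of_cc₁ {u : V} (hu : u ∈ G.c₁ ++ [G.B']) : u ∈ G.c₁ := by
  rcases List.mem_append.1 hu with h | h
  · exact h
  · simp at h
    rw [h, ← G.c₁_zero]
    exact List.getElem_mem _

/-- Unique successor along `gp`. -/
lemma succ_gp {k : ℕ} (h : k + 1 < G.gp.length) {v : V}
    (he : E (G.gp[k]'(by omega)) v) : v = G.gp[k+1] := by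
  rcases G.edge_cases he with hc | hc | hc | hc
  · obtain ⟨k', hk', h1, h2⟩ := mem_listEdges.1 hc
    have : k' = k := G.gp_nodup.getElem_inj_iff.1 h1
    subst this; exact h2.symm
  · obtain ⟨k', hk', h1, h2⟩ := mem_listEdges.1 hc
    have hmem : G.gp[k]'(by omega) ∈ listVerts G.gp ∩ listVerts G.gm := by
      constructor
      · exact List.getElem_mem _
      · rw [← h1]; exact List.getElem_mem _
    rw [G.int_gp_gm] at hmem
    rcases hmem with hB | hB'
    · have hk0 : k = 0 := (G.gp_get_eq_B_iff (by omega)).1 hB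
      have : G.gm[k']'(by omega) = B := by rw [h1, hB]
      have := (G.gm_get_eq_B_iff (by omega)).1 this
      omega
    · have := (G.gp_get_eq_B'_iff (by omega)).1 hB'
      omega
  · have hu : G.gp[k]'(by omega) ∈ G.c₁ :=
      G.mem_c₁_of_cc₁ (fst_mem_of_listEdges hc)
    have hmem : G.gp[k]'(by omega) ∈ listVerts G.gp ∩ listVerts G.c₁ :=
      ⟨List.getElem_mem _, hu⟩
    rw [G.int_gp_c₁] at hmem
    have := (G.gp_get_eq_B'_iff (by omega)).1 hmem
    omega
  · have hu : G.gp[k]'(by omega) ∈ G.c₂ := by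
      rcases List.mem_append.1 (fst_mem_of_listEdges hc) with h' | h'
      · exact h'
      · simp at h'
        exfalso
        have := (G.gp_get_eq_B'_iff (by omega)).1 h'
        omega
    have hmem : G.gp[k]'(by omega) ∈ listVerts G.gp ∩ listVerts G.c₂ :=
      ⟨List.getElem_mem _, hu⟩
    rw [G.int_gp_c₂] at hmem
    have := (G.gp_get_eq_B'_iff (by omega)).1 hmem
    omega

/-- Unique successor along `gm` (away from `B'`). -/
lemma succ_gm {k : ℕ} (hk0 : 0 < k) (h : k + 1 < G.gm.length) {v : V}
    (he : E (G.gm[k]'(by omega)) v) : v = G.gm[k+1] := by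
  have hnB : G.gm[k]'(by omega) ≠ B := by
    intro hB; have := (G.gm_get_eq_B_iff (by omega)).1 hB; omega
  have hnB' : G.gm[k]'(by omega) ≠ G.B' := by
    intro hB; have := (G.gm_get_eq_B'_iff (by omega)).1 hB; omega
  rcases G.edge_cases he with hc | hc | hc | hc
  · have hmem : G.gm[k]'(by omega) ∈ listVerts G.gp ∩ listVerts G.gm :=
      ⟨fst_mem_of_listEdges hc, List.getElem_mem _⟩
    rw [G.int_gp_gm] at hmem
    rcases hmem with hB | hB' <;> [exact absurd hB hnB; exact absurd hB' hnB']
  · obtain ⟨k', hk', h1, h2⟩ := mem_listEdges.1 hc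
    have : k' = k := G.gm_nodup.getElem_inj_iff.1 h1
    subst this; exact h2.symm
  · have hmem : G.gm[k]'(by omega) ∈ listVerts G.gm ∩ listVerts G.c₁ :=
      ⟨List.getElem_mem _, G.mem_c₁_of_cc₁ (fst_mem_of_listEdges hc)⟩
    rw [G.int_gm_c₁] at hmem
    exact absurd hmem hnB'
  · have hu : G.gm[k]'(by omega) ∈ G.c₂ := by
      rcases List.mem_append.1 (fst_mem_of_listEdges hc) with h' | h'
      · exact h'
      · simp at h'; exact absurd h' hnB'
    have hmem : G.gm[k]'(by omega) ∈ listVerts G.gm ∩ listVerts G.c₂ :=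
      ⟨List.getElem_mem _, hu⟩
    rw [G.int_gm_c₂] at hmem
    exact absurd hmem hnB'

/-- Unique successor along `c₁` (away from `B'`). -/
lemma succ_c₁ {k : ℕ} (hk0 : 0 < k) (h : k < G.c₁.length) {v : V}
    (he : E (G.c₁[k]'h) v) : v = (G.c₁ ++ [G.B'])[k+1]'(by simp; omega) := by
  have hnB : G.c₁[k]'h ≠ B := G.c₁_get_ne_B h
  have hnB' : G.c₁[k]'h ≠ G.B' := by
    intro hB; have := (G.c₁_get_eq_B'_iff h).1 hB; omega
  rcases G.edge_cases he with hc | hc | hc | hc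
  · have hmem : G.c₁[k]'h ∈ listVerts G.gp ∩ listVerts G.c₁ :=
      ⟨fst_mem_of_listEdges hc, List.getElem_mem _⟩
    rw [G.int_gp_c₁] at hmem
    exact absurd hmem hnB'
  · have hmem : G.c₁[k]'h ∈ listVerts G.gm ∩ listVerts G.c₁ :=
      ⟨fst_mem_of_listEdges hc, List.getElem_mem _⟩
    rw [G.int_gm_c₁] at hmem
    exact absurd hmem hnB'
  · obtain ⟨k', hk', h1, h2⟩ := mem_listEdges.1 hc
    have hlen : (G.c₁ ++ [G.B']).length = G.c₁.length + 1 := by simp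
    have hk'' : k' < G.c₁.length := by rw [hlen] at hk'; omega
    rw [G.cc₁_getElem hk''] at h1
    have : k' = k := G.c₁_nodup.getElem_inj_iff.1 h1
    subst this; exact h2.symm
  · have hu : G.c₁[k]'h ∈ G.c₂ := by
      rcases List.mem_append.1 (fst_mem_of_listEdges hc) with h' | h'
      · exact h'
      · simp at h'; exact absurd h' hnB'
    have hmem : G.c₁[k]'h ∈ listVerts G.c₁ ∩ listVerts G.c₂ :=
      ⟨List.getElem_mem _, hu⟩
    rw [G.int_c₁_c₂] at hmem
    exact absurd hmem hnB'

/-- Unique successor along `c₂` (away from `B'`). -/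
lemma succ_c₂ {k : ℕ} (hk0 : 0 < k) (h : k < G.c₂.length) {v : V}
    (he : E (G.c₂[k]'h) v) : v = (G.c₂ ++ [G.B'])[k+1]'(by simp; omega) := by
  have hnB : G.c₂[k]'h ≠ B := G.c₂_get_ne_B h
  have hnB' : G.c₂[k]'h ≠ G.B' := by
    intro hB; have := (G.c₂_get_eq_B'_iff h).1 hB; omega
  rcases G.edge_cases he with hc | hc | hc | hc
  · have hmem : G.c₂[k]'h ∈ listVerts G.gp ∩ listVerts G.c₂ :=
      ⟨fst_mem_of_listEdges hc, List.getElem_mem _⟩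
    rw [G.int_gp_c₂] at hmem
    exact absurd hmem hnB'
  · have hmem : G.c₂[k]'h ∈ listVerts G.gm ∩ listVerts G.c₂ :=
      ⟨fst_mem_of_listEdges hc, List.getElem_mem _⟩
    rw [G.int_gm_c₂] at hmem
    exact absurd hmem hnB'
  · have hu : G.c₂[k]'h ∈ G.c₁ := G.mem_c₁_of_cc₁ (fst_mem_of_listEdges hc)
    have hmem : G.c₂[k]'h ∈ listVerts G.c₁ ∩ listVerts G.c₂ :=
      ⟨hu, List.getElem_mem _⟩
    rw [G.int_c₁_c₂] at hmem
    exact absurd hmem hnB'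
  · obtain ⟨k', hk', h1, h2⟩ := mem_listEdges.1 hc
    have hlen : (G.c₂ ++ [G.B']).length = G.c₂.length + 1 := by simp
    have hk'' : k' < G.c₂.length := by rw [hlen] at hk'; omega
    rw [G.cc₂_getElem hk''] at h1
    have : k' = k := G.c₂_nodup.getElem_inj_iff.1 h1
    subst this; exact h2.symm

/-- The unique successor of `B` is `gp[1]`. -/
lemma succ_B {v : V} (he : E B v) : v = G.gp[1]'(by have := G.gp_len; omega) := by
  rcases G.edge_cases he with hc | hc | hc | hc
  · obtain ⟨k', hk', h1, h2⟩ := mem_listEdges.1 hc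
    have hk0 : k' = 0 := (G.gp_get_eq_B_iff (by omega)).1 h1
    subst hk0; exact h2.symm
  · obtain ⟨k', hk', h1, h2⟩ := mem_listEdges.1 hc
    have := (G.gm_get_eq_B_iff (by omega)).1 h1
    omega
  · exact absurd (G.mem_c₁_of_cc₁ (fst_mem_of_listEdges hc)) G.B_not_mem_c₁
  · have hu : B ∈ G.c₂ := by
      rcases List.mem_append.1 (fst_mem_of_listEdges hc) with h' | h'
      · exact h'
      · simp at h'; exact absurd h'.symm G.hB'
    exact absurd hu G.B_not_mem_c₂

/-- The successors of `B'`. -/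
lemma succ_B' {v : V} (he : E G.B' v) :
    v = G.gm[1]'(by have := G.gm_len; omega) ∨
    v = (G.c₁ ++ [G.B'])[1]'(by simp; exact G.c₁_pos) ∨
    v = (G.c₂ ++ [G.B'])[1]'(by simp; exact G.c₂_pos) := by
  rcases G.edge_cases he with hc | hc | hc | hc
  · obtain ⟨k', hk', h1, h2⟩ := mem_listEdges.1 hc
    have := (G.gp_get_eq_B'_iff (by omega)).1 h1
    omega
  · obtain ⟨k', hk', h1, h2⟩ := mem_listEdges.1 hc
    have hk0 : k' = 0 := (G.gm_get_eq_B'_iff (by omega)).1 h1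
    subst hk0; exact Or.inl h2.symm
  · obtain ⟨k', hk', h1, h2⟩ := mem_listEdges.1 hc
    have hlen : (G.c₁ ++ [G.B']).length = G.c₁.length + 1 := by simp
    have hk'' : k' < G.c₁.length := by rw [hlen] at hk'; omega
    rw [G.cc₁_getElem hk''] at h1
    have hk0 : k' = 0 := (G.c₁_get_eq_B'_iff hk'').1 h1
    subst hk0; exact Or.inr (Or.inl h2.symm)
  · obtain ⟨k', hk', h1, h2⟩ := mem_listEdges.1 hc
    have hlen : (G.c₂ ++ [G.B']).length = G.c₂.length + 1 := by simp
    have hk'' : k' < G.c₂.length := by rw [hlen] at hk'; omega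
    rw [G.cc₂_getElem hk''] at h1
    have hk0 : k' = 0 := (G.c₂_get_eq_B'_iff hk'').1 h1
    subst hk0; exact Or.inr (Or.inr h2.symm)

end TwoCycleSpokeGraph

end Spoke2
section Spoke3

variable {V : Type*} {E : V → V → Prop} {B : V}

namespace TwoCycleSpokeGraph

variable (G : TwoCycleSpokeGraph V E B) {x : ℤ → V}

lemma follow_gp (hx : x ∈ vertexShift E) {i : ℤ} (hi : x i = B) :
    ∀ k : ℕ, ∀ h : k < G.gp.length, x (i + k) = G.gp[k] := by
  intro k
  induction k with
  | zero => intro h; simpa using hi.trans G.gp_zero.symm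
  | succ k ih =>
    intro h
    have hk : k < G.gp.length := by omega
    have hprev := ih hk
    have he : E (x (i + k)) (x (i + k + 1)) := hx (i + k)
    rw [hprev] at he
    have := G.succ_gp (k := k) (by omega) he
    have harith : i + ((k : ℤ) + 1) = i + k + 1 := by ring
    rw [(by push_cast; ring : (i + ((k+1 : ℕ) : ℤ)) = i + k + 1)]
    exact this

lemma follow_gm (hx : x ∈ vertexShift E) {p : ℤ} (hp : x p = G.B')
    (h1 : x (p + 1) = G.gm[1]'(by have := G.gm_len; omega)) :
    ∀ k : ℕ, ∀ h : k < G.gm.length, x (p + k) = G.gm[k] := by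
  intro k
  induction k with
  | zero => intro h; simpa using hp.trans G.gm_zero.symm
  | succ k ih =>
    intro h
    rcases Nat.eq_zero_or_pos k with hk0 | hk0
    · subst hk0; simpa using h1
    · have hk : k < G.gm.length := by omega
      have hprev := ih hk
      have he : E (x (p + k)) (x (p + k + 1)) := hx (p + k)
      rw [hprev] at he
      have := G.succ_gm hk0 (by omega) he
      rw [(by push_cast; ring : (p + ((k+1 : ℕ) : ℤ)) = p + k + 1)]
      exact this

lemma follow_c₁ (hx : x ∈ vertexShift E) {p : ℤ} (hp : x p = G.B')
    (h1 : x (p + 1) = (G.c₁ ++ [G.B'])[1]'(by simp; exact G.c₁_pos)) :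
    ∀ k : ℕ, ∀ h : k ≤ G.c₁.length, x (p + k) = (G.c₁ ++ [G.B'])[k]'(by simp; omega) := by
  intro k
  induction k with
  | zero =>
    intro h
    have : (G.c₁ ++ [G.B'])[0]'(by simp) = G.B' := by
      rw [G.cc₁_getElem G.c₁_pos]; exact G.c₁_zero
    simpa [this] using hp
  | succ k ih =>
    intro h
    rcases Nat.eq_zero_or_pos k with hk0 | hk0
    · subst hk0; simpa using h1
    · have hk : k ≤ G.c₁.length := by omega
      have hkd : k < G.c₁.length := by omega
      have hprev := ih hk
      rw [G.cc₁_getElem hkd] at hprev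
      have he : E (x (p + k)) (x (p + k + 1)) := hx (p + k)
      rw [hprev] at he
      have := G.succ_c₁ hk0 hkd he
      rw [(by push_cast; ring : (p + ((k+1 : ℕ) : ℤ)) = p + k + 1)]
      exact this

lemma follow_c₂ (hx : x ∈ vertexShift E) {p : ℤ} (hp : x p = G.B')
    (h1 : x (p + 1) = (G.c₂ ++ [G.B'])[1]'(by simp; exact G.c₂_pos)) :
    ∀ k : ℕ, ∀ h : k ≤ G.c₂.length, x (p + k) = (G.c₂ ++ [G.B'])[k]'(by simp; omega) := by
  intro k
  induction k with
  | zero =>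
    intro h
    have : (G.c₂ ++ [G.B'])[0]'(by simp) = G.B' := by
      rw [G.cc₂_getElem G.c₂_pos]; exact G.c₂_zero
    simpa [this] using hp
  | succ k ih =>
    intro h
    rcases Nat.eq_zero_or_pos k with hk0 | hk0
    · subst hk0; simpa using h1
    · have hk : k ≤ G.c₂.length := by omega
      have hkd : k < G.c₂.length := by omega
      have hprev := ih hk
      rw [G.cc₂_getElem hkd] at hprev
      have he : E (x (p + k)) (x (p + k + 1)) := hx (p + k)
      rw [hprev] at he
      have := G.succ_c₂ hk0 hkd he
      rw [(by push_cast; ring : (p + ((k+1 : ℕ) : ℤ)) = p + k + 1)]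
      exact this

lemma gap_from_B' (hx : x ∈ vertexShift E) (i j : ℤ)
    (hmid : ∀ l : ℤ, i < l → l < j → x l ≠ B) (hj : x j = B) :
    ∀ n : ℕ, ∀ p : ℤ, (j - p).toNat = n → i < p → p < j → x p = G.B' →
    ∃ s t : ℕ, (j - p).toNat = (G.gm.length - 1) + s * G.d₁ + t * G.d₂ := by
  intro n
  induction n using Nat.strong_induction_on with
  | _ n ih =>
    intro p hn hip hpj hp
    have he : E (x p) (x (p + 1)) := hx p
    rw [hp] at he
    rcases G.succ_B' he with h1 | h1 | h1
    · -- follows gm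
      have hfol := G.follow_gm hx hp h1
      have hq : x (p + ((G.gm.length - 1 : ℕ) : ℤ)) = B := by
        rw [hfol (G.gm.length - 1) (by have := G.gm_pos; omega)]
        exact G.gm_getLast
      set q : ℤ := p + ((G.gm.length - 1 : ℕ) : ℤ) with hqdef
      have hiq : i < q := by
        have := G.gm_len
        have : (1 : ℤ) ≤ ((G.gm.length - 1 : ℕ) : ℤ) := by
          have := G.gm_len; omega
        omega
      have hqj : q = j := by
        by_contra hne
        rcases lt_or_gt_of_ne hne with hlt | hgt
        · exact hmid q hiq hlt hq
        · -- j strictly between p and q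
          have hk1 : (0:ℤ) < j - p := by omega
          have hk2 : j - p < ((G.gm.length - 1 : ℕ) : ℤ) := by omega
          set k : ℕ := (j - p).toNat with hkdef
          have hk : k < G.gm.length := by omega
          have : x (p + (k : ℤ)) = G.gm[k] := hfol k hk
          rw [(by omega : p + (k : ℤ) = j)] at this
          rw [hj] at this
          have := (G.gm_get_eq_B_iff hk).1 this.symm
          omega
      refine ⟨0, 0, ?_⟩
      have : j - p = ((G.gm.length - 1 : ℕ) : ℤ) := by omega
      omega
    · -- follows c₁
      have hfol := G.follow_c₁ hx hp h1
      have hq : x (p + (G.c₁.length : ℤ)) = G.B' := by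
        have := hfol G.c₁.length le_rfl
        rwa [G.cc₁_getElem_last] at this
      set q : ℤ := p + (G.c₁.length : ℤ) with hqdef
      have hiq : i < q := by have := G.c₁_pos; omega
      have hqj : q < j := by
        rcases lt_trichotomy q j with hlt | heq | hgt
        · exact hlt
        · exfalso; rw [heq, hj] at hq; exact G.hB' hq.symm
        · exfalso
          have hk1 : (0:ℤ) < j - p := by omega
          have hk2 : j - p < (G.c₁.length : ℤ) := by omega
          set k : ℕ := (j - p).toNat with hkdef
          have hk : k < G.c₁.length := by omega
          have hv : x (p + (k : ℤ)) = (G.c₁ ++ [G.B'])[k]'(by simp; omega) :=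
            hfol k (by omega)
          rw [G.cc₁_getElem hk] at hv
          rw [(by omega : p + (k : ℤ) = j), hj] at hv
          exact G.c₁_get_ne_B hk hv.symm
      have hlt : (j - q).toNat < n := by have := G.c₁_pos; omega
      obtain ⟨s, t, hst⟩ := ih _ hlt q rfl hiq hqj hq
      refine ⟨s + 1, t, ?_⟩
      have : (j - p).toNat = (j - q).toNat + G.c₁.length := by omega
      rw [this, hst]
      unfold d₁ d₂ at *
      ring
    · -- follows c₂
      have hfol := G.follow_c₂ hx hp h1
      have hq : x (p + (G.c₂.length : ℤ)) = G.B' := by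
        have := hfol G.c₂.length le_rfl
        rwa [G.cc₂_getElem_last] at this
      set q : ℤ := p + (G.c₂.length : ℤ) with hqdef
      have hiq : i < q := by have := G.c₂_pos; omega
      have hqj : q < j := by
        rcases lt_trichotomy q j with hlt | heq | hgt
        · exact hlt
        · exfalso; rw [heq, hj] at hq; exact G.hB' hq.symm
        · exfalso
          have hk1 : (0:ℤ) < j - p := by omega
          have hk2 : j - p < (G.c₂.length : ℤ) := by omega
          set k : ℕ := (j - p).toNat with hkdef
          have hk : k < G.c₂.length := by omega
          have hv : x (p + (k : ℤ)) = (G.c₂ ++ [G.B'])[k]'(by simp; omega) :=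
            hfol k (by omega)
          rw [G.cc₂_getElem hk] at hv
          rw [(by omega : p + (k : ℤ) = j), hj] at hv
          exact G.c₂_get_ne_B hk hv.symm
      have hlt : (j - q).toNat < n := by have := G.c₂_pos; omega
      obtain ⟨s, t, hst⟩ := ih _ hlt q rfl hiq hqj hq
      refine ⟨s, t + 1, ?_⟩
      have : (j - p).toNat = (j - q).toNat + G.c₂.length := by omega
      rw [this, hst]
      unfold d₁ d₂ at *
      ring

/-- Forward gap counting: gaps between consecutive `B`s lie in `S`. -/
lemma gap_count (hx : x ∈ vertexShift E) {i j : ℤ} (hij : i < j)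
    (hi : x i = B) (hj : x j = B) (hmid : ∀ l : ℤ, i < l → l < j → x l ≠ B) :
    ∃ s t : ℕ, (j - i - 1).toNat = G.m + s * G.d₁ + t * G.d₂ := by
  have hfol := G.follow_gp hx hi
  have hL := G.gp_len
  have hM := G.gm_len
  have hp0 : x (i + ((G.gp.length - 1 : ℕ) : ℤ)) = G.B' := by
    rw [hfol (G.gp.length - 1) (by omega)]
    exact G.gp_getLast
  set p₀ : ℤ := i + ((G.gp.length - 1 : ℕ) : ℤ) with hp0def
  have hip0 : i < p₀ := by
    have : (1:ℤ) ≤ ((G.gp.length - 1 : ℕ) : ℤ) := by omega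
    omega
  have hp0j : p₀ < j := by
    rcases lt_trichotomy p₀ j with hlt | heq | hgt
    · exact hlt
    · exfalso; rw [heq, hj] at hp0; exact G.hB' hp0.symm
    · exfalso
      have hk1 : (0:ℤ) < j - i := by omega
      have hk2 : j - i < ((G.gp.length - 1 : ℕ) : ℤ) := by omega
      set k : ℕ := (j - i).toNat with hkdef
      have hk : k < G.gp.length := by omega
      have hv : x (i + (k : ℤ)) = G.gp[k] := hfol k hk
      rw [(by omega : i + (k : ℤ) = j), hj] at hv
      have := (G.gp_get_eq_B_iff hk).1 hv.symm
      omega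
  obtain ⟨s, t, hst⟩ := G.gap_from_B' hx i j hmid hj (j - p₀).toNat p₀ rfl hip0 hp0j hp0
  refine ⟨s, t, ?_⟩
  unfold m
  omega

end TwoCycleSpokeGraph

end Spoke3
section Spoke4

variable {V : Type*} {E : V → V → Prop} {B : V}

/-- `(s*d - 1) % d = d - 1` for positive `s`, `d`. -/
lemma mod_pred {d s : ℕ} (hd : 0 < d) (hs : 0 < s) : (s * d - 1) % d = d - 1 := by
  obtain ⟨s', rfl⟩ : ∃ s', s = s' + 1 := ⟨s - 1, by omega⟩
  have e1 : (s' + 1) * d = s' * d + d := by ring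
  have e2 : (s' + 1) * d - 1 = (d - 1) + s' * d := by omega
  rw [e2, Nat.add_mul_mod_self_right, Nat.mod_eq_of_lt (by omega)]

lemma succ_mod {d a : ℕ} (hd : 0 < d) :
    (a + 1) % d = if a % d + 1 = d then 0 else a % d + 1 := by
  have key : (a % d + 1) % d = (a + 1) % d := Nat.mod_add_mod a d 1
  have hlt : a % d < d := Nat.mod_lt a hd
  split_ifs with h
  · rw [← key, h, Nat.mod_self]
  · rw [← key, Nat.mod_eq_of_lt (by omega)]

namespace TwoCycleSpokeGraph

variable (G : TwoCycleSpokeGraph V E B)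

/-- Length of the `B`-to-`B` word with `s` traversals of `c₁` and `t` of `c₂`. -/
def lenW (s t : ℕ) : ℕ :=
  G.gp.length - 1 + s * G.c₁.length + t * G.c₂.length + (G.gm.length - 1)

lemma lenW_eq (s t : ℕ) : G.lenW s t = G.m + s * G.d₁ + t * G.d₂ + 1 := by
  have := G.gp_len; have := G.gm_len
  unfold lenW m d₁ d₂
  omega

/-- The `B`-to-`B` word as a function. -/
noncomputable def wf (s t k : ℕ) : V :=
  if h : k < G.gp.length - 1 then G.gp[k]'(by omega)
  else if k < G.gp.length - 1 + s * G.c₁.length then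
    G.c₁[(k - (G.gp.length - 1)) % G.c₁.length]'(Nat.mod_lt _ G.c₁_pos)
  else if k < G.gp.length - 1 + s * G.c₁.length + t * G.c₂.length then
    G.c₂[(k - (G.gp.length - 1) - s * G.c₁.length) % G.c₂.length]'(Nat.mod_lt _ G.c₂_pos)
  else G.gm[min (k - (G.gp.length - 1) - s * G.c₁.length - t * G.c₂.length) (G.gm.length - 1)]'
    (by have := G.gm_pos; omega)

lemma wf_gp {s t k : ℕ} (h : k < G.gp.length - 1) : G.wf s t k = G.gp[k]'(by omega) := by
  rw [wf, dif_pos h]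

lemma wf_c₁ {s t k : ℕ} (h1 : G.gp.length - 1 ≤ k) (h2 : k < G.gp.length - 1 + s * G.c₁.length) :
    G.wf s t k = G.c₁[(k - (G.gp.length - 1)) % G.c₁.length]'(Nat.mod_lt _ G.c₁_pos) := by
  rw [wf, dif_neg (by omega), if_pos h2]

lemma wf_c₂ {s t k : ℕ} (h1 : G.gp.length - 1 + s * G.c₁.length ≤ k)
    (h2 : k < G.gp.length - 1 + s * G.c₁.length + t * G.c₂.length) :
    G.wf s t k =
      G.c₂[(k - (G.gp.length - 1) - s * G.c₁.length) % G.c₂.length]'(Nat.mod_lt _ G.c₂_pos) := by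
  rw [wf, dif_neg (by omega), if_neg (by omega), if_pos h2]

lemma wf_gm {s t k : ℕ} (h1 : G.gp.length - 1 + s * G.c₁.length + t * G.c₂.length ≤ k) :
    G.wf s t k =
      G.gm[min (k - (G.gp.length - 1) - s * G.c₁.length - t * G.c₂.length) (G.gm.length - 1)]'
        (by have := G.gm_pos; omega) := by
  rw [wf, dif_neg (by omega), if_neg (by omega), if_neg (by omega)]

lemma wf_zero (s t : ℕ) : G.wf s t 0 = B := by
  have := G.gp_len
  rw [G.wf_gp (by omega)]
  exact G.gp_zero

/-- The value at the "branch point" and beyond is `B'`. -/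
lemma wf_off (s t : ℕ) : G.wf s t (G.gp.length - 1) = G.B' := by
  rcases Nat.eq_zero_or_pos s with hs | hs
  · rcases Nat.eq_zero_or_pos t with ht | ht
    · rw [G.wf_gm (by simp [hs, ht])]
      convert G.gm_zero using 2
      omega
    · rw [G.wf_c₂ (by simp [hs]) (by have := Nat.mul_pos ht G.c₂_pos; omega)]
      convert G.c₂_zero using 2
      simp [hs]
  · rw [G.wf_c₁ le_rfl (by have := Nat.mul_pos hs G.c₁_pos; omega)]
    convert G.c₁_zero using 2
    simp

lemma wf_off₂ (s t : ℕ) : G.wf s t (G.gp.length - 1 + s * G.c₁.length) = G.B' := by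
  rcases Nat.eq_zero_or_pos t with ht | ht
  · rw [G.wf_gm (by simp [ht])]
    convert G.gm_zero using 2
    omega
  · rw [G.wf_c₂ le_rfl (by have := Nat.mul_pos ht G.c₂_pos; omega)]
    convert G.c₂_zero using 2
    simp

lemma wf_off₃ (s t : ℕ) :
    G.wf s t (G.gp.length - 1 + s * G.c₁.length + t * G.c₂.length) = G.B' := by
  rw [G.wf_gm le_rfl]
  convert G.gm_zero using 2
  omega

lemma wf_last (s t : ℕ) : G.wf s t (G.lenW s t) = B := by
  rw [G.wf_gm (by unfold lenW; omega)]
  convert G.gm_getLast using 2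
  unfold lenW
  omega

lemma wf_ne_B {s t k : ℕ} (h0 : 0 < k) (h1 : k < G.lenW s t) : G.wf s t k ≠ B := by
  have hL := G.gp_len; have hM := G.gm_len
  by_cases hgp : k < G.gp.length - 1
  · rw [G.wf_gp hgp]
    intro hB
    have := (G.gp_get_eq_B_iff (by omega)).1 hB
    omega
  · by_cases hc1 : k < G.gp.length - 1 + s * G.c₁.length
    · rw [G.wf_c₁ (by omega) hc1]; exact G.c₁_get_ne_B _
    · by_cases hc2 : k < G.gp.length - 1 + s * G.c₁.length + t * G.c₂.length
      · rw [G.wf_c₂ (by omega) hc2]; exact G.c₂_get_ne_B _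
      · rw [G.wf_gm (by omega)]
        intro hB
        have hidx : k - (G.gp.length - 1) - s * G.c₁.length - t * G.c₂.length
            < G.gm.length - 1 := by unfold lenW at h1; omega
        have := (G.gm_get_eq_B_iff (by have := G.gm_pos; omega)).1 hB
        omega

lemma wf_step {s t k : ℕ} (h : k < G.lenW s t) : E (G.wf s t k) (G.wf s t (k + 1)) := by
  have hL := G.gp_len; have hM := G.gm_len
  have hd₁ := G.c₁_pos; have hd₂ := G.c₂_pos
  by_cases hgp : k + 1 < G.gp.length - 1
  · rw [G.wf_gp (by omega), G.wf_gp hgp]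
    exact G.edge_gp (by omega)
  · by_cases hgp2 : k + 1 = G.gp.length - 1
    · -- step into the branch point
      have hval : G.wf s t (k + 1) = G.B' := by rw [hgp2]; exact G.wf_off s t
      rw [G.wf_gp (by omega), hval]
      have h2 := G.edge_gp (k := k) (by omega)
      have h3 : G.gp[k+1]'(by omega) = G.B' := by
        have := G.gp_getLast
        rw [getElem_congr_idx hgp2]
        exact this
      rwa [h3] at h2
    · by_cases hc1 : k + 1 ≤ G.gp.length - 1 + s * G.c₁.length
      · -- current position inside the c₁ phase
        have hk1 : G.gp.length - 1 ≤ k := by omega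
        rw [G.wf_c₁ hk1 (by omega)]
        by_cases hend : k + 1 = G.gp.length - 1 + s * G.c₁.length
        · -- last step of c₁ phase
          rw [hend, G.wf_off₂]
          have hmod : (k - (G.gp.length - 1)) % G.c₁.length = G.c₁.length - 1 := by
            have : k - (G.gp.length - 1) = s * G.c₁.length - 1 := by omega
            rw [this]
            exact mod_pred hd₁ (by
              rcases Nat.eq_zero_or_pos s with hs | hs
              · exfalso; rw [hs] at hend; simp at hend; omega
              · exact hs)
          rw [getElem_congr_idx hmod]
          exact G.edge_c₁_last
        · rw [G.wf_c₁ (by omega) (by omega)]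
          have harg : (k + 1 - (G.gp.length - 1)) % G.c₁.length
              = ((k - (G.gp.length - 1)) + 1) % G.c₁.length := by
            rw [(by omega : k + 1 - (G.gp.length - 1) = (k - (G.gp.length - 1)) + 1)]
          rw [getElem_congr_idx harg]
          exact G.cyc₁_step _
      · by_cases hc2 : k + 1 ≤ G.gp.length - 1 + s * G.c₁.length + t * G.c₂.length
        · -- current position inside the c₂ phase
          have hk1 : G.gp.length - 1 + s * G.c₁.length ≤ k := by omega
          rw [G.wf_c₂ hk1 (by omega)]
          by_cases hend : k + 1 = G.gp.length - 1 + s * G.c₁.length + t * G.c₂.length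
          · rw [hend, G.wf_off₃]
            have hmod : (k - (G.gp.length - 1) - s * G.c₁.length) % G.c₂.length
                = G.c₂.length - 1 := by
              have : k - (G.gp.length - 1) - s * G.c₁.length = t * G.c₂.length - 1 := by omega
              rw [this]
              exact mod_pred hd₂ (by
                rcases Nat.eq_zero_or_pos t with ht | ht
                · exfalso; rw [ht] at hend; simp at hend; omega
                · exact ht)
            rw [getElem_congr_idx hmod]
            exact G.edge_c₂_last
          · rw [G.wf_c₂ (by omega) (by omega)]
            have harg : (k + 1 - (G.gp.length - 1) - s * G.c₁.length) % G.c₂.length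
                = ((k - (G.gp.length - 1) - s * G.c₁.length) + 1) % G.c₂.length := by
              rw [(by omega : k + 1 - (G.gp.length - 1) - s * G.c₁.length
                = (k - (G.gp.length - 1) - s * G.c₁.length) + 1)]
            rw [getElem_congr_idx harg]
            -- analogue of cyc₁_step for c₂
            set a := k - (G.gp.length - 1) - s * G.c₁.length with ha
            have key : (a % G.c₂.length + 1) % G.c₂.length = (a+1) % G.c₂.length :=
              Nat.mod_add_mod a G.c₂.length 1
            by_cases hlt : a % G.c₂.length + 1 < G.c₂.length
            · have heq : (a+1) % G.c₂.length = a % G.c₂.length + 1 := by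
                rw [← key, Nat.mod_eq_of_lt hlt]
              rw [getElem_congr_idx heq]
              exact G.edge_c₂ hlt
            · have hm : a % G.c₂.length < G.c₂.length := Nat.mod_lt a hd₂
              have h1 : a % G.c₂.length = G.c₂.length - 1 := by omega
              have h2 : (a+1) % G.c₂.length = 0 := by
                rw [← key, h1, (by omega : G.c₂.length - 1 + 1 = G.c₂.length), Nat.mod_self]
              rw [getElem_congr_idx h1, getElem_congr_idx h2]
              have := G.edge_c₂_last
              rwa [← G.c₂_zero] at this
        · -- inside the gm phase
          have hk1 : G.gp.length - 1 + s * G.c₁.length + t * G.c₂.length ≤ k := by omega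
          have hidx : k - (G.gp.length - 1) - s * G.c₁.length - t * G.c₂.length
              < G.gm.length - 1 := by unfold lenW at h; omega
          rw [G.wf_gm hk1, G.wf_gm (by omega)]
          rw [getElem_congr_idx (show
            min (k - (G.gp.length - 1) - s * G.c₁.length - t * G.c₂.length) (G.gm.length - 1)
              = k - (G.gp.length - 1) - s * G.c₁.length - t * G.c₂.length by omega)]
          rw [getElem_congr_idx (show
            min (k + 1 - (G.gp.length - 1) - s * G.c₁.length - t * G.c₂.length) (G.gm.length - 1)
              = (k - (G.gp.length - 1) - s * G.c₁.length - t * G.c₂.length) + 1 by omega)]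
          exact G.edge_gm (by omega)

/-- The right-infinite tail word. -/
noncomputable def tf (k : ℕ) : V :=
  if h : k < G.gp.length - 1 then G.gp[k]'(by omega)
  else G.c₁[(k - (G.gp.length - 1)) % G.c₁.length]'(Nat.mod_lt _ G.c₁_pos)

lemma tf_zero : G.tf 0 = B := by
  have := G.gp_len
  rw [tf, dif_pos (by omega)]
  exact G.gp_zero

lemma tf_ne_B {k : ℕ} (h0 : 0 < k) : G.tf k ≠ B := by
  rw [tf]
  split_ifs with h
  · intro hB
    have := (G.gp_get_eq_B_iff (by omega)).1 hB
    omega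
  · exact G.c₁_get_ne_B _

lemma tf_step (k : ℕ) : E (G.tf k) (G.tf (k + 1)) := by
  have hL := G.gp_len
  by_cases hgp : k + 1 < G.gp.length - 1
  · rw [tf, dif_pos (by omega), tf, dif_pos hgp]
    exact G.edge_gp (by omega)
  · by_cases hgp2 : k + 1 = G.gp.length - 1
    · have hval : G.tf (k + 1) = G.B' := by
        rw [tf, dif_neg (by omega)]
        rw [getElem_congr_idx (show (k + 1 - (G.gp.length - 1)) % G.c₁.length = 0 by
          rw [(show k + 1 - (G.gp.length - 1) = 0 by omega)]; exact Nat.zero_mod _)]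
        exact G.c₁_zero
      rw [tf, dif_pos (by omega), hval]
      have h2 := G.edge_gp (k := k) (by omega)
      have h3 : G.gp[k+1]'(by omega) = G.B' := by
        have := G.gp_getLast
        rw [getElem_congr_idx hgp2]
        exact this
      rwa [h3] at h2
    · rw [tf, dif_neg (by omega), tf, dif_neg (by omega)]
      have harg : (k + 1 - (G.gp.length - 1)) % G.c₁.length
          = ((k - (G.gp.length - 1)) + 1) % G.c₁.length := by
        rw [(by omega : k + 1 - (G.gp.length - 1) = (k - (G.gp.length - 1)) + 1)]
      rw [getElem_congr_idx harg]
      exact G.cyc₁_step _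

/-- The left-infinite head word (indexed by distance to the next `1`). -/
noncomputable def uf (n : ℕ) : V :=
  if h : n < G.gm.length then G.gm[G.gm.length - 1 - n]'(by omega)
  else G.c₁[G.c₁.length - 1 - ((n - G.gm.length) % G.c₁.length)]'(by have := G.c₁_pos; omega)

lemma uf_zero : G.uf 0 = B := by
  have := G.gm_pos
  rw [uf, dif_pos (by omega)]
  simpa using G.gm_getLast

lemma uf_ne_B {n : ℕ} (h0 : 0 < n) : G.uf n ≠ B := by
  rw [uf]
  split_ifs with h
  · intro hB
    have := (G.gm_get_eq_B_iff (by omega)).1 hB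
    omega
  · exact G.c₁_get_ne_B _

lemma uf_step (n : ℕ) : E (G.uf (n + 1)) (G.uf n) := by
  have hM := G.gm_len
  have hd := G.c₁_pos
  by_cases h1 : n + 1 < G.gm.length
  · rw [uf, dif_pos h1, uf, dif_pos (by omega)]
    have := G.edge_gm (k := G.gm.length - 1 - (n+1)) (by omega)
    rwa [getElem_congr_idx (by omega : G.gm.length - 1 - (n+1) + 1 = G.gm.length - 1 - n)]
      at this
  · by_cases h2 : n + 1 = G.gm.length
    · rw [uf, dif_neg (by omega), uf, dif_pos (by omega)]
      have he : G.c₁.length - 1 - ((n + 1 - G.gm.length) % G.c₁.length)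
          = G.c₁.length - 1 := by
        rw [(show n + 1 - G.gm.length = 0 by omega)]
        simp
      rw [getElem_congr_idx he]
      have hgm : G.gm[G.gm.length - 1 - n]'(by omega) = G.B' := by
        rw [getElem_congr_idx (by omega : G.gm.length - 1 - n = 0)]
        exact G.gm_zero
      rw [hgm]
      exact G.edge_c₁_last
    · -- both in the c₁ phase
      have hn : G.gm.length ≤ n := by omega
      rw [uf, dif_neg (by omega), uf, dif_neg (by omega)]
      set a := n - G.gm.length with ha
      have ha' : n + 1 - G.gm.length = a + 1 := by omega
      have key : (a % G.c₁.length + 1) % G.c₁.length = (a+1) % G.c₁.length :=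
        Nat.mod_add_mod a G.c₁.length 1
      have hm : a % G.c₁.length < G.c₁.length := Nat.mod_lt a hd
      by_cases hlt : a % G.c₁.length + 1 < G.c₁.length
      · have heq : (a+1) % G.c₁.length = a % G.c₁.length + 1 := by
          rw [← key, Nat.mod_eq_of_lt hlt]
        rw [getElem_congr_idx (show G.c₁.length - 1 - ((n + 1 - G.gm.length) % G.c₁.length)
            = G.c₁.length - 1 - (a % G.c₁.length + 1) by rw [ha', heq])]
        have := G.edge_c₁ (k := G.c₁.length - 1 - (a % G.c₁.length + 1)) (by omega)
        rwa [getElem_congr_idx (by omega :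
          G.c₁.length - 1 - (a % G.c₁.length + 1) + 1 = G.c₁.length - 1 - a % G.c₁.length)]
          at this
      · have h1' : a % G.c₁.length = G.c₁.length - 1 := by omega
        have h2' : (a+1) % G.c₁.length = 0 := by
          rw [← key, h1', (by omega : G.c₁.length - 1 + 1 = G.c₁.length), Nat.mod_self]
        rw [getElem_congr_idx (show G.c₁.length - 1 - ((n + 1 - G.gm.length) % G.c₁.length)
            = G.c₁.length - 1 by rw [ha', h2']; simp)]
        rw [getElem_congr_idx (show G.c₁.length - 1 - ((n - G.gm.length) % G.c₁.length)
            = 0 by rw [← ha, h1']; omega)]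
        rw [G.c₁_zero]
        exact G.edge_c₁_last

/-- The all-zero bi-infinite point: run around `c₁` forever. -/
noncomputable def zf (i : ℤ) : V :=
  G.c₁[(i % (G.c₁.length : ℤ)).toNat]'(by
    have hd := G.c₁_pos
    have h1 : 0 ≤ i % (G.c₁.length : ℤ) := Int.emod_nonneg i (by exact_mod_cast hd.ne')
    have h2 : i % (G.c₁.length : ℤ) < (G.c₁.length : ℤ) :=
      Int.emod_lt_of_pos i (by exact_mod_cast hd)
    omega)

lemma zf_ne_B (i : ℤ) : G.zf i ≠ B := G.c₁_get_ne_B _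

lemma zf_step (i : ℤ) : E (G.zf i) (G.zf (i + 1)) := by
  have hd := G.c₁_pos
  have hN : (0:ℤ) < (G.c₁.length : ℤ) := by exact_mod_cast hd
  set N : ℤ := (G.c₁.length : ℤ) with hNdef
  have h1 : 0 ≤ i % N := Int.emod_nonneg i (by omega)
  have h2 : i % N < N := Int.emod_lt_of_pos i hN
  have hdecomp : i + 1 = (i % N + 1) + N * (i / N) := by
    have := Int.emod_add_mul_ediv i N
    omega
  have hstep : (i + 1) % N = (i % N + 1) % N := by
    rw [hdecomp, Int.add_mul_emod_self_left]
  have hkey : ((i+1) % N).toNat = ((i % N).toNat + 1) % G.c₁.length := by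
    by_cases hlt : i % N + 1 < N
    · rw [hstep, Int.emod_eq_of_lt (by omega) (by omega)]
      rw [Nat.mod_eq_of_lt (by omega)]
      omega
    · have : i % N + 1 = N := by omega
      rw [hstep, this, Int.emod_self]
      have : (i % N).toNat + 1 = G.c₁.length := by omega
      rw [this, Nat.mod_self]
      omega
  unfold zf
  rw [getElem_congr_idx hkey]
  have := G.cyc₁_step ((i % N).toNat)
  rwa [getElem_congr_idx (Nat.mod_eq_of_lt (by omega) : (i % N).toNat % G.c₁.length = _)]
    at this

end TwoCycleSpokeGraph

end Spoke4
section Spoke5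

open Classical

lemma fin2_cases (v : Fin 2) : v = 0 ∨ v = 1 := by
  fin_cases v
  · exact Or.inl rfl
  · exact Or.inr rfl

lemma fin2_one_ne_zero : (1 : Fin 2) ≠ 0 := by decide

/-- There is a `1` at or before `i`. -/
def HasPrev (y : ℤ → Fin 2) (i : ℤ) : Prop := ∃ z : ℤ, z ≤ i ∧ y z = 1

/-- There is a `1` strictly after `i`. -/
def HasNext (y : ℤ → Fin 2) (i : ℤ) : Prop := ∃ z : ℤ, i < z ∧ y z = 1

/-- The position of the last `1` at or before `i`. -/
noncomputable def prevOne (y : ℤ → Fin 2) (i : ℤ) : ℤ :=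
  if h : HasPrev y i then
    (Int.exists_greatest_of_bdd (P := fun z => z ≤ i ∧ y z = 1)
      ⟨i, fun _ hz => hz.1⟩ h).choose
  else 0

/-- The position of the first `1` strictly after `i`. -/
noncomputable def nextOne (y : ℤ → Fin 2) (i : ℤ) : ℤ :=
  if h : HasNext y i then
    (Int.exists_least_of_bdd (P := fun z => i < z ∧ y z = 1)
      ⟨i + 1, fun _ hz => Int.add_one_le_iff.mpr hz.1⟩ h).choose
  else 0

lemma prevOne_spec {y : ℤ → Fin 2} {i : ℤ} (h : HasPrev y i) :
    (prevOne y i ≤ i ∧ y (prevOne y i) = 1) ∧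
      ∀ z : ℤ, z ≤ i ∧ y z = 1 → z ≤ prevOne y i := by
  unfold prevOne
  rw [dif_pos h]
  exact (Int.exists_greatest_of_bdd (P := fun z => z ≤ i ∧ y z = 1)
    ⟨i, fun _ hz => hz.1⟩ h).choose_spec

lemma nextOne_spec {y : ℤ → Fin 2} {i : ℤ} (h : HasNext y i) :
    (i < nextOne y i ∧ y (nextOne y i) = 1) ∧
      ∀ z : ℤ, i < z ∧ y z = 1 → nextOne y i ≤ z := by
  unfold nextOne
  rw [dif_pos h]
  exact (Int.exists_least_of_bdd (P := fun z => i < z ∧ y z = 1)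
    ⟨i + 1, fun _ hz => Int.add_one_le_iff.mpr hz.1⟩ h).choose_spec

lemma prevOne_le {y : ℤ → Fin 2} {i : ℤ} (h : HasPrev y i) : prevOne y i ≤ i :=
  (prevOne_spec h).1.1

lemma prevOne_one {y : ℤ → Fin 2} {i : ℤ} (h : HasPrev y i) : y (prevOne y i) = 1 :=
  (prevOne_spec h).1.2

lemma prevOne_ge {y : ℤ → Fin 2} {i : ℤ} (h : HasPrev y i) {z : ℤ} (hz : z ≤ i)
    (h1 : y z = 1) : z ≤ prevOne y i :=
  (prevOne_spec h).2 z ⟨hz, h1⟩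

lemma nextOne_gt {y : ℤ → Fin 2} {i : ℤ} (h : HasNext y i) : i < nextOne y i :=
  (nextOne_spec h).1.1

lemma nextOne_one {y : ℤ → Fin 2} {i : ℤ} (h : HasNext y i) : y (nextOne y i) = 1 :=
  (nextOne_spec h).1.2

lemma nextOne_le {y : ℤ → Fin 2} {i : ℤ} (h : HasNext y i) {z : ℤ} (hz : i < z)
    (h1 : y z = 1) : nextOne y i ≤ z :=
  (nextOne_spec h).2 z ⟨hz, h1⟩

lemma hasPrev_succ {y : ℤ → Fin 2} {i : ℤ} (h : HasPrev y i) : HasPrev y (i + 1) := by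
  obtain ⟨z, hz, h1⟩ := h
  exact ⟨z, by omega, h1⟩

lemma prevOne_succ_of_one {y : ℤ → Fin 2} {i : ℤ} (h1 : y (i + 1) = 1) :
    prevOne y (i + 1) = i + 1 := by
  have hp : HasPrev y (i + 1) := ⟨i + 1, le_rfl, h1⟩
  exact le_antisymm (prevOne_le hp) (prevOne_ge hp le_rfl h1)

lemma prevOne_succ_of_zero {y : ℤ → Fin 2} {i : ℤ} (h0 : y (i + 1) = 0)
    (h : HasPrev y i) : prevOne y (i + 1) = prevOne y i := by
  have hp : HasPrev y (i + 1) := hasPrev_succ h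
  refine le_antisymm ?_ (prevOne_ge hp (by have := prevOne_le h; omega) (prevOne_one h))
  have hle : prevOne y (i + 1) ≤ i + 1 := prevOne_le hp
  have h1 : y (prevOne y (i + 1)) = 1 := prevOne_one hp
  have hne : prevOne y (i + 1) ≠ i + 1 := by
    intro he; rw [he, h0] at h1; exact fin2_one_ne_zero h1.symm
  exact prevOne_ge h (by omega) h1

lemma prevOne_self_of_one {y : ℤ → Fin 2} {i : ℤ} (h1 : y i = 1) : prevOne y i = i := by
  have hp : HasPrev y i := ⟨i, le_rfl, h1⟩
  exact le_antisymm (prevOne_le hp) (prevOne_ge hp le_rfl h1)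

namespace TwoCycleSpokeGraph

variable {V : Type*} {E : V → V → Prop} {B : V} (G : TwoCycleSpokeGraph V E B)

/-- Choose a representation of a gap length. -/
noncomputable def pick (g : ℕ) : ℕ × ℕ :=
  if h : ∃ s t : ℕ, g = G.m + s * G.d₁ + t * G.d₂ then (h.choose, h.choose_spec.choose)
  else (0, 0)

lemma pick_spec {g : ℕ} (h : ∃ s t : ℕ, g = G.m + s * G.d₁ + t * G.d₂) :
    g = G.m + (G.pick g).1 * G.d₁ + (G.pick g).2 * G.d₂ := by
  unfold pick
  rw [dif_pos h]
  exact h.choose_spec.choose_spec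

/-- The constructed preimage point of `y`. -/
noncomputable def pt (y : ℤ → Fin 2) (i : ℤ) : V :=
  if _ : HasPrev y i then
    if _ : HasNext y i then
      G.wf (G.pick (nextOne y i - prevOne y i - 1).toNat).1
           (G.pick (nextOne y i - prevOne y i - 1).toNat).2 (i - prevOne y i).toNat
    else G.tf (i - prevOne y i).toNat
  else
    if _ : HasNext y i then G.uf (nextOne y i - i).toNat
    else G.zf i

variable {y : ℤ → Fin 2}

lemma pt_of_both {i : ℤ} (hp : HasPrev y i) (hn : HasNext y i) :
    G.pt y i = G.wf (G.pick (nextOne y i - prevOne y i - 1).toNat).1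
      (G.pick (nextOne y i - prevOne y i - 1).toNat).2 (i - prevOne y i).toNat := by
  unfold pt; rw [dif_pos hp, dif_pos hn]

lemma pt_of_prev {i : ℤ} (hp : HasPrev y i) (hn : ¬ HasNext y i) :
    G.pt y i = G.tf (i - prevOne y i).toNat := by
  unfold pt; rw [dif_pos hp, dif_neg hn]

lemma pt_of_next {i : ℤ} (hp : ¬ HasPrev y i) (hn : HasNext y i) :
    G.pt y i = G.uf (nextOne y i - i).toNat := by
  unfold pt; rw [dif_neg hp, dif_pos hn]

lemma pt_of_none {i : ℤ} (hp : ¬ HasPrev y i) (hn : ¬ HasNext y i) :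
    G.pt y i = G.zf i := by
  unfold pt; rw [dif_neg hp, dif_neg hn]

lemma pt_eq_B_of_one {i : ℤ} (h1 : y i = 1) : G.pt y i = B := by
  have hp : HasPrev y i := ⟨i, le_rfl, h1⟩
  have hpe : prevOne y i = i := prevOne_self_of_one h1
  by_cases hn : HasNext y i
  · rw [G.pt_of_both hp hn, hpe, (show (i - i).toNat = 0 by omega)]
    exact G.wf_zero _ _
  · rw [G.pt_of_prev hp hn, hpe, (show (i - i).toNat = 0 by omega)]
    exact G.tf_zero

/-- The gap hypothesis coming from membership in the gap shift. -/
def GapHyp (G : TwoCycleSpokeGraph V E B) (y : ℤ → Fin 2) : Prop :=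
  ∀ i j : ℤ, i < j → y i = 1 → y j = 1 → (∀ l : ℤ, i < l → l < j → y l = 0) →
    ∃ s t : ℕ, (j - i - 1).toNat = G.m + s * G.d₁ + t * G.d₂

lemma gap_mem (hgap : G.GapHyp y) {i : ℤ} (hp : HasPrev y i) (hn : HasNext y i) :
    ∃ s t : ℕ, (nextOne y i - prevOne y i - 1).toNat = G.m + s * G.d₁ + t * G.d₂ := by
  have hji : prevOne y i ≤ i := prevOne_le hp
  have hij' : i < nextOne y i := nextOne_gt hn
  refine hgap _ _ (by omega) (prevOne_one hp) (nextOne_one hn) ?_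
  intro l hl1 hl2
  rcases fin2_cases (y l) with h0 | h1
  · exact h0
  · exfalso
    rcases le_or_gt l i with hle | hgt
    · have := prevOne_ge hp hle h1; omega
    · have := nextOne_le hn hgt h1; omega

lemma pt_step (hgap : G.GapHyp y) (i : ℤ) : E (G.pt y i) (G.pt y (i + 1)) := by
  by_cases hp : HasPrev y i
  · by_cases hn : HasNext y i
    · -- both a previous and a next 1 exist
      have hji : prevOne y i ≤ i := prevOne_le hp
      have hij' : i < nextOne y i := nextOne_gt hn
      have hyj' : y (nextOne y i) = 1 := nextOne_one hn
      have hmem := G.gap_mem hgap hp hn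
      have hpick := G.pick_spec hmem
      have hlen : G.lenW (G.pick (nextOne y i - prevOne y i - 1).toNat).1
          (G.pick (nextOne y i - prevOne y i - 1).toNat).2
          = (nextOne y i - prevOne y i - 1).toNat + 1 := by
        rw [G.lenW_eq]; omega
      rcases fin2_cases (y (i + 1)) with h0 | h1
      · -- the next symbol is 0
        have hj'ne : nextOne y i ≠ i + 1 := by
          intro he; rw [he, h0] at hyj'; exact fin2_one_ne_zero hyj'.symm
        have hp' : HasPrev y (i + 1) := hasPrev_succ hp
        have hn' : HasNext y (i + 1) := ⟨nextOne y i, by omega, hyj'⟩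
        have hpe : prevOne y (i + 1) = prevOne y i := prevOne_succ_of_zero h0 hp
        have hne : nextOne y (i + 1) = nextOne y i := by
          refine le_antisymm (nextOne_le hn' (by omega) hyj') ?_
          exact nextOne_le hn (by have := nextOne_gt hn'; omega) (nextOne_one hn')
        rw [G.pt_of_both hp hn, G.pt_of_both hp' hn', hpe, hne]
        rw [(show ((i + 1) - prevOne y i).toNat = (i - prevOne y i).toNat + 1 by omega)]
        exact G.wf_step (by omega)
      · -- the next symbol is 1
        have hptB : G.pt y (i + 1) = B := G.pt_eq_B_of_one h1
        have hj' : nextOne y i = i + 1 :=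
          le_antisymm (nextOne_le hn (by omega) h1) (by omega)
        rw [G.pt_of_both hp hn, hptB]
        rw [(show (i - prevOne y i).toNat = (nextOne y i - prevOne y i - 1).toNat by omega)]
        have hstep := G.wf_step (s := (G.pick (nextOne y i - prevOne y i - 1).toNat).1)
          (t := (G.pick (nextOne y i - prevOne y i - 1).toNat).2)
          (k := (nextOne y i - prevOne y i - 1).toNat) (by omega)
        rwa [(show (nextOne y i - prevOne y i - 1).toNat + 1
          = G.lenW (G.pick (nextOne y i - prevOne y i - 1).toNat).1
              (G.pick (nextOne y i - prevOne y i - 1).toNat).2 by omega), G.wf_last] at hstep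
    · -- only a previous 1 exists
      have hall : ∀ z : ℤ, i < z → y z = 0 := by
        intro z hz
        rcases fin2_cases (y z) with h0 | h1
        · exact h0
        · exact absurd ⟨z, hz, h1⟩ hn
      have h0 : y (i + 1) = 0 := hall _ (by omega)
      have hp' : HasPrev y (i + 1) := hasPrev_succ hp
      have hn' : ¬ HasNext y (i + 1) := by
        rintro ⟨z, hz, h1⟩
        rw [hall z (by omega)] at h1
        exact fin2_one_ne_zero h1.symm
      have hpe : prevOne y (i + 1) = prevOne y i := prevOne_succ_of_zero h0 hp
      have hji : prevOne y i ≤ i := prevOne_le hp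
      rw [G.pt_of_prev hp hn, G.pt_of_prev hp' hn', hpe]
      rw [(show ((i + 1) - prevOne y i).toNat = (i - prevOne y i).toNat + 1 by omega)]
      exact G.tf_step _
  · by_cases hn : HasNext y i
    · -- only a next 1 exists
      have hij' : i < nextOne y i := nextOne_gt hn
      have hyj' : y (nextOne y i) = 1 := nextOne_one hn
      have hzero : ∀ z : ℤ, z ≤ i → y z = 0 := by
        intro z hz
        rcases fin2_cases (y z) with h0 | h1
        · exact h0
        · exact absurd ⟨z, hz, h1⟩ hp
      rcases fin2_cases (y (i + 1)) with h0 | h1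
      · have hj'ne : nextOne y i ≠ i + 1 := by
          intro he; rw [he, h0] at hyj'; exact fin2_one_ne_zero hyj'.symm
        have hp' : ¬ HasPrev y (i + 1) := by
          rintro ⟨z, hz, h1⟩
          rcases eq_or_lt_of_le hz with he | hlt
          · rw [he, h0] at h1; exact fin2_one_ne_zero h1.symm
          · rw [hzero z (by omega)] at h1; exact fin2_one_ne_zero h1.symm
        have hn' : HasNext y (i + 1) := ⟨nextOne y i, by omega, hyj'⟩
        have hne : nextOne y (i + 1) = nextOne y i := by
          refine le_antisymm (nextOne_le hn' (by omega) hyj') ?_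
          exact nextOne_le hn (by have := nextOne_gt hn'; omega) (nextOne_one hn')
        rw [G.pt_of_next hp hn, G.pt_of_next hp' hn', hne]
        rw [(show (nextOne y i - i).toNat = (nextOne y i - (i + 1)).toNat + 1 by omega)]
        exact G.uf_step _
      · have hptB : G.pt y (i + 1) = B := G.pt_eq_B_of_one h1
        have hj' : nextOne y i = i + 1 :=
          le_antisymm (nextOne_le hn (by omega) h1) (by omega)
        rw [G.pt_of_next hp hn, hptB]
        rw [(show (nextOne y i - i).toNat = 0 + 1 by omega)]
        have := G.uf_step 0
        rwa [G.uf_zero] at this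
    · -- no 1 at all
      have hall : ∀ z : ℤ, i < z → y z = 0 := by
        intro z hz
        rcases fin2_cases (y z) with h0 | h1
        · exact h0
        · exact absurd ⟨z, hz, h1⟩ hn
      have hp' : ¬ HasPrev y (i + 1) := by
        rintro ⟨z, hz, h1⟩
        rcases le_or_gt z i with hle | hgt
        · exact hp ⟨z, hle, h1⟩
        · rw [hall z hgt] at h1; exact fin2_one_ne_zero h1.symm
      have hn' : ¬ HasNext y (i + 1) := by
        rintro ⟨z, hz, h1⟩
        rw [hall z (by omega)] at h1
        exact fin2_one_ne_zero h1.symm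
      rw [G.pt_of_none hp hn, G.pt_of_none hp' hn']
      exact G.zf_step i

lemma pt_label (hgap : G.GapHyp y) (i : ℤ) : stdLabel B (G.pt y i) = y i := by
  rcases fin2_cases (y i) with h0 | h1
  · rw [h0]
    have hne : G.pt y i ≠ B := by
      by_cases hp : HasPrev y i
      · have hji : prevOne y i ≤ i := prevOne_le hp
        have hji' : prevOne y i ≠ i := by
          intro he
          have := prevOne_one hp
          rw [he, h0] at this
          exact fin2_one_ne_zero this.symm
        by_cases hn : HasNext y i
        · have hij' : i < nextOne y i := nextOne_gt hn
          have hmem := G.gap_mem hgap hp hn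
          have hpick := G.pick_spec hmem
          have hlen : G.lenW (G.pick (nextOne y i - prevOne y i - 1).toNat).1
              (G.pick (nextOne y i - prevOne y i - 1).toNat).2
              = (nextOne y i - prevOne y i - 1).toNat + 1 := by
            rw [G.lenW_eq]; omega
          rw [G.pt_of_both hp hn]
          exact G.wf_ne_B (by omega) (by omega)
        · rw [G.pt_of_prev hp hn]
          exact G.tf_ne_B (by omega)
      · by_cases hn : HasNext y i
        · have hij' : i < nextOne y i := nextOne_gt hn
          rw [G.pt_of_next hp hn]
          exact G.uf_ne_B (by omega)
        · rw [G.pt_of_none hp hn]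
          exact G.zf_ne_B i
    unfold stdLabel
    rw [if_neg hne]
  · rw [h1, G.pt_eq_B_of_one h1]
    unfold stdLabel
    rw [if_pos rfl]

end TwoCycleSpokeGraph

end Spoke5
/-- the image of the standard factor code on a two-cycle spoke graph `G`
is the `S`-gap shift with `S = {m + s·d₁ + t·d₂ : s, t ∈ ℤ≥0}`. -/
theorem statement15 {V : Type*} [Fintype V] [TopologicalSpace V] [DiscreteTopology V]
    (E : V → V → Prop) (B : V) (G : TwoCycleSpokeGraph V E B) :
    oneBlockCode (stdLabel B) '' vertexShift E =
      GapShift {n : ℕ | ∃ s t : ℕ, n = G.m + s * G.d₁ + t * G.d₂} := by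
  ext y
  constructor
  · rintro ⟨x, hx, rfl⟩
    constructor
    · intro i j hij h1i h1j hzero
      have hxi : x i = B := by
        by_contra hne
        unfold oneBlockCode stdLabel at h1i
        rw [if_neg hne] at h1i
        exact fin2_one_ne_zero h1i.symm
      have hxj : x j = B := by
        by_contra hne
        unfold oneBlockCode stdLabel at h1j
        rw [if_neg hne] at h1j
        exact fin2_one_ne_zero h1j.symm
      have hmid : ∀ l : ℤ, i < l → l < j → x l ≠ B := by
        intro l hl1 hl2 hB
        have h0 := hzero l hl1 hl2
        unfold oneBlockCode stdLabel at h0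
        rw [if_pos hB] at h0
        exact fin2_one_ne_zero h0
      exact G.gap_count hx hij hxi hxj hmid
    · intro hfin
      exfalso
      refine (Set.infinite_of_injective_forall_mem
        (f := fun s : ℕ => G.m + s * G.d₁) ?_ ?_) hfin
      · intro a b hab
        simp only at hab
        have : a * G.d₁ = b * G.d₁ := by omega
        exact Nat.eq_of_mul_eq_mul_right (by have := G.c₁_pos; exact this) this
      · intro a
        exact ⟨a, 0, by ring⟩
  · intro hy
    have hgap : G.GapHyp y := fun i j hij h1i h1j hzero =>
      hy.1 i j hij h1i h1j hzero
    exact ⟨G.pt y, fun i => G.pt_step hgap i, funext fun i => G.pt_label hgap i⟩
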